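/- arXiv:2107.11644 — 3 statements merged into one kernel-verified Lean document; each statement's English description precedes it below -/
import Mathlib

section
/- Let D ∈ ℝ^{n×k} and S ∈ ℝ^{k×p} with ⟨S, (DᵀD)S⟩ ≠ 0. Define the spectral (Barzilai–Borwein) stepsizes α^{BB1} = (1/2)·⟨S,S⟩ / ⟨S, (DᵀD)S⟩ and α^{BB2} = (1/2)·⟨S, (DᵀD)S⟩ / ⟨(DᵀD)S, (DᵀD)S⟩. Then 1/(2‖DᵀD‖₂) ≤ α^{BB2} ≤ min{ α^{BB1}, 1/(2σ_min²(D)) }, where σ_min(D) denotes the smallest nonzero singular value of D. -/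
/-!
Diagonalise `A = DᵀD = U diag(λ) Uᵀ` and put `wᵢ = ‖(UᵀS)ᵢ‖² ≥ 0`. Then `⟨S,S⟩ = ∑ wᵢ`,
`⟨S,AS⟩ = ∑ λᵢ wᵢ` and `⟨AS,AS⟩ = ∑ λᵢ² wᵢ`, so both stepsizes are ratios of moments of
the weights `w` on the spectrum of `A`. Since `0 ≤ λᵢ ≤ ‖A‖₂` and every nonzero `λᵢ` is at
least `σ_min²`, the bounds reduce to `λᵢ² ≤ ‖A‖₂ λᵢ`, `σ_min² λᵢ ≤ λᵢ²` and Cauchy–Schwarz.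
-/

open Matrix

noncomputable def specNorm {α β : Type*} [Fintype α] [Fintype β] [DecidableEq β]
    (A : Matrix α β ℝ) : ℝ :=
  ‖LinearMap.toContinuousLinearMap (Matrix.toEuclideanLin A)‖

open Finset

section WeightedMoments

variable {ι : Type*} (s : Finset ι) {w l : ι → ℝ}

theorem sum_sq_mul_le_mul_sum_mul {N : ℝ} (hw : ∀ i ∈ s, 0 ≤ w i)
    (hl : ∀ i ∈ s, 0 ≤ l i ∧ l i ≤ N) : ∑ i ∈ s, l i ^ 2 * w i ≤ N * ∑ i ∈ s, l i * w i := by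
  rw [mul_sum]
  refine sum_le_sum fun i hi => ?_
  obtain ⟨hl0, hlN⟩ := hl i hi
  have := mul_nonneg (mul_nonneg (sub_nonneg.2 hlN) hl0) (hw i hi)
  nlinarith

theorem mul_sum_mul_le_sum_sq_mul {m : ℝ} (hm : 0 ≤ m) (hw : ∀ i ∈ s, 0 ≤ w i)
    (hl : ∀ i ∈ s, l i ≠ 0 → m ≤ l i) : m * ∑ i ∈ s, l i * w i ≤ ∑ i ∈ s, l i ^ 2 * w i := by
  rw [mul_sum]
  refine sum_le_sum fun i hi => ?_
  rcases eq_or_ne (l i) 0 with hl0 | hl0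
  · simp [hl0]
  · have hml := hl i hi hl0
    have := mul_nonneg (mul_nonneg (sub_nonneg.2 hml) (hm.trans hml)) (hw i hi)
    nlinarith

theorem sq_sum_mul_le_sum_mul_sum_sq_mul (hw : ∀ i ∈ s, 0 ≤ w i) :
    (∑ i ∈ s, l i * w i) ^ 2 ≤ (∑ i ∈ s, w i) * ∑ i ∈ s, l i ^ 2 * w i :=
  sum_sq_le_sum_mul_sum_of_sq_le_mul s hw (fun i hi => mul_nonneg (sq_nonneg _) (hw i hi))
    fun i _ => le_of_eq (by ring)

end WeightedMoments

namespace Matrix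

variable {m p : Type*} [Fintype m] [Fintype p]

theorem trace_transpose_mul_diagonal_mul [DecidableEq m] (W : Matrix m p ℝ) (d : m → ℝ) :
    (Wᵀ * diagonal d * W).trace = ∑ i, d i * ∑ j, W i j ^ 2 := by
  simp only [trace, diag, mul_apply, transpose_apply, diagonal_apply, mul_ite, mul_zero,
    sum_ite_eq', mem_univ, if_true, mul_sum]
  rw [sum_comm]
  exact sum_congr rfl fun i _ => sum_congr rfl fun j _ => by ring

open scoped Matrix.Norms.L2Operator in
theorem IsHermitian.abs_eigenvalues_le_specNorm [DecidableEq m] {A : Matrix m m ℝ}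
    (hA : A.IsHermitian) (i : m) : |hA.eigenvalues i| ≤ specNorm A := by
  have : Nonempty m := ⟨i⟩
  -- under the L2-operator norm, `‖A‖` is `specNorm A` by definition
  exact spectrum.norm_le_norm_of_mem (hA.eigenvalues_mem_spectrum_real i)

namespace IsHermitian

variable [DecidableEq m] {A : Matrix m m ℝ} (hA : A.IsHermitian)

noncomputable def eigenWeight (S : Matrix m p ℝ) (i : m) : ℝ :=
  ∑ j, ((hA.eigenvectorUnitary : Matrix m m ℝ)ᵀ * S) i j ^ 2

theorem eigenWeight_nonneg (S : Matrix m p ℝ) (i : m) : 0 ≤ hA.eigenWeight S i :=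
  sum_nonneg fun _ _ => sq_nonneg _

theorem eigenvectorUnitary_mul_diagonal_mul_transpose :
    (hA.eigenvectorUnitary : Matrix m m ℝ) * diagonal hA.eigenvalues *
      (hA.eigenvectorUnitary : Matrix m m ℝ)ᵀ = A := by
  conv_rhs => rw [hA.spectral_theorem]
  simp [Unitary.conjStarAlgAut_apply, star_eq_conjTranspose]

theorem trace_conj_eigenvectorUnitary (S : Matrix m p ℝ) (d : m → ℝ) :
    (Sᵀ * ((hA.eigenvectorUnitary : Matrix m m ℝ) * diagonal d *
      (hA.eigenvectorUnitary : Matrix m m ℝ)ᵀ) * S).trace = ∑ i, d i * hA.eigenWeight S i := by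
  simp only [eigenWeight]
  rw [← trace_transpose_mul_diagonal_mul]
  simp only [transpose_mul, transpose_transpose, Matrix.mul_assoc]

theorem trace_transpose_mul_self_eq_sum_eigenWeight (S : Matrix m p ℝ) :
    (Sᵀ * S).trace = ∑ i, hA.eigenWeight S i := by
  have hU : (hA.eigenvectorUnitary : Matrix m m ℝ) *
      (hA.eigenvectorUnitary : Matrix m m ℝ)ᵀ = 1 := by
    simpa [star_eq_conjTranspose] using mem_unitaryGroup_iff.mp hA.eigenvectorUnitary.2
  simpa [hU] using hA.trace_conj_eigenvectorUnitary S 1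

theorem trace_transpose_mul_mul_eq_sum_eigenvalues_mul_eigenWeight (S : Matrix m p ℝ) :
    (Sᵀ * (A * S)).trace = ∑ i, hA.eigenvalues i * hA.eigenWeight S i := by
  rw [← Matrix.mul_assoc, ← hA.trace_conj_eigenvectorUnitary,
    hA.eigenvectorUnitary_mul_diagonal_mul_transpose]

theorem trace_transpose_mul_self_mul_eq_sum_eigenvalues_sq_mul_eigenWeight (S : Matrix m p ℝ) :
    ((A * S)ᵀ * (A * S)).trace = ∑ i, hA.eigenvalues i ^ 2 * hA.eigenWeight S i := by
  set U : Matrix m m ℝ := (hA.eigenvectorUnitary : Matrix m m ℝ)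
  have hUU : Uᵀ * U = 1 := by
    simpa [star_eq_conjTranspose] using mem_unitaryGroup_iff'.mp hA.eigenvectorUnitary.2
  have hAA : Aᵀ * A = U * diagonal (fun i => hA.eigenvalues i ^ 2) * Uᵀ := by
    rw [← conjTranspose_eq_transpose_of_trivial, hA.eq]
    conv_lhs => rw [← hA.eigenvectorUnitary_mul_diagonal_mul_transpose]
    calc _ = U * diagonal hA.eigenvalues * (Uᵀ * U) * diagonal hA.eigenvalues * Uᵀ := by
          simp only [U, Matrix.mul_assoc]
      _ = _ := by simp only [hUU, Matrix.mul_one, Matrix.mul_assoc, diagonal_mul_diagonal, sq]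
  rw [transpose_mul, Matrix.mul_assoc, ← Matrix.mul_assoc Aᵀ, hAA, ← Matrix.mul_assoc,
    hA.trace_conj_eigenvectorUnitary]

end IsHermitian

end Matrix

theorem bb_stepsize_bounds_X_general
    {n k p : ℕ} (D : Matrix (Fin n) (Fin k) ℝ) (S : Matrix (Fin k) (Fin p) ℝ)
    (hD : (Dᵀ * D).IsHermitian)
    (σmin : ℝ) (hσpos : 0 < σmin)
    (hσmin : ∀ i, hD.eigenvalues i ≠ 0 → σmin ^ 2 ≤ hD.eigenvalues i)
    (hS : (Sᵀ * (Dᵀ * D * S)).trace ≠ 0)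
    (αBB1 αBB2 : ℝ)
    (h1 : αBB1 = (1 / 2) * (Sᵀ * S).trace / (Sᵀ * (Dᵀ * D * S)).trace)
    (h2 : αBB2 = (1 / 2) * (Sᵀ * (Dᵀ * D * S)).trace /
      ((Dᵀ * D * S)ᵀ * (Dᵀ * D * S)).trace) :
    1 / (2 * specNorm (Dᵀ * D)) ≤ αBB2 ∧ αBB2 ≤ min αBB1 (1 / (2 * σmin ^ 2)) := by
  rw [hD.trace_transpose_mul_self_eq_sum_eigenWeight] at h1
  rw [hD.trace_transpose_mul_mul_eq_sum_eigenvalues_mul_eigenWeight] at h1 h2 hS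
  rw [hD.trace_transpose_mul_self_mul_eq_sum_eigenvalues_sq_mul_eigenWeight] at h2
  set l := hD.eigenvalues
  set w := hD.eigenWeight S
  have hw : ∀ i ∈ univ, 0 ≤ w i := fun i _ => hD.eigenWeight_nonneg S i
  have hl : ∀ i, 0 ≤ l i := by
    simpa [conjTranspose_eq_transpose_of_trivial] using
      (posSemidef_conjTranspose_mul_self D).eigenvalues_nonneg
  have hb : 0 < ∑ i, l i * w i := (sum_nonneg fun i hi => mul_nonneg (hl i) (hw i hi)).lt_of_ne' hS
  have hcs : (∑ i, l i * w i) ^ 2 ≤ (∑ i, w i) * ∑ i, l i ^ 2 * w i :=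
    sq_sum_mul_le_sum_mul_sum_sq_mul univ hw
  have hc : 0 < ∑ i, l i ^ 2 * w i :=
    pos_of_mul_pos_right ((pow_pos hb 2).trans_le hcs) (sum_nonneg hw)
  have hcN : ∑ i, l i ^ 2 * w i ≤ specNorm (Dᵀ * D) * ∑ i, l i * w i :=
    sum_sq_mul_le_mul_sum_mul univ hw fun i _ =>
      ⟨hl i, (le_abs_self _).trans (hD.abs_eigenvalues_le_specNorm i)⟩
  have hcσ : σmin ^ 2 * ∑ i, l i * w i ≤ ∑ i, l i ^ 2 * w i :=
    mul_sum_mul_le_sum_sq_mul univ (sq_nonneg σmin) hw fun i _ => hσmin i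
  have hN : 0 < specNorm (Dᵀ * D) := (pos_iff_pos_of_mul_pos (hc.trans_le hcN)).mpr hb
  refine ⟨?_, le_min ?_ ?_⟩
  · rw [h2, div_le_div_iff₀ (by positivity) hc]
    nlinarith
  · rw [h1, h2, div_le_div_iff₀ hc hb]
    nlinarith
  · rw [h2, div_le_div_iff₀ hc (by positivity)]
    nlinarith

/-- Bounds on the Barzilai–Borwein stepsizes for the `X`-block of the DL problem:
`1/(2‖DᵀD‖₂) ≤ α^{BB2} ≤ min{α^{BB1}, 1/(2 σ_min²(D))}`, where `σ_min(D)` is the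
smallest nonzero singular value of `D`. -/
theorem bb_stepsize_bounds_X
    {n k p : ℕ} (D : Matrix (Fin n) (Fin k) ℝ) (S : Matrix (Fin k) (Fin p) ℝ)
    (hD : (Dᵀ * D).IsHermitian)
    (σmin : ℝ) (hσpos : 0 < σmin)
    (hσeig : ∃ i, hD.eigenvalues i = σmin ^ 2)
    (hσmin : ∀ i, hD.eigenvalues i ≠ 0 → σmin ^ 2 ≤ hD.eigenvalues i)
    (hS : (Sᵀ * (Dᵀ * D * S)).trace ≠ 0)
    (αBB1 αBB2 : ℝ)
    (h1 : αBB1 = (1 / 2) * (Sᵀ * S).trace / (Sᵀ * (Dᵀ * D * S)).trace)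
    (h2 : αBB2 = (1 / 2) * (Sᵀ * (Dᵀ * D * S)).trace /
      ((Dᵀ * D * S)ᵀ * (Dᵀ * D * S)).trace) :
    1 / (2 * specNorm (Dᵀ * D)) ≤ αBB2 ∧ αBB2 ≤ min αBB1 (1 / (2 * σmin ^ 2)) :=
  bb_stepsize_bounds_X_general D S hD σmin hσpos hσmin hS αBB1 αBB2 h1 h2
end

section
/- Let Y ∈ ℝ^{(n₁n₂)×p}, G₁ ∈ ℝ^{n₁×r₁} with G₁ᵀG₁ = I_{r₁}, G₂ ∈ ℝ^{(r₁n₂)×r₂} with G₂ᵀG₂ = I_{r₂}, and X ∈ ℝ^{k×p}. For G₃ ∈ ℝ^{r₂×k} define the gradient map ∇_{G₃} H(G₃) = 2 G₂ᵀ(I_{n₂} ⊗ G₁)ᵀ( −Y + (I_{n₂} ⊗ G₁)G₂G₃X ) Xᵀ. Then for all Ĝ₃, G̃₃ ∈ ℝ^{r₂×k}, ∇_{G₃} H(Ĝ₃) − ∇_{G₃} H(G̃₃) = 2 (Ĝ₃ − G̃₃) X Xᵀ, and ‖∇_{G₃} H(Ĝ₃) − ∇_{G₃} H(G̃₃)‖_F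 ≤ 2‖X‖₂² ‖Ĝ₃ − G̃₃‖_F; i.e., ∇_{G₃} H is Lipschitz with constant L_{G₃} = 2‖X‖₂². -/
open Matrix Kronecker

noncomputable def frobNorm {α β : Type*} [Fintype α] [Fintype β] (A : Matrix α β ℝ) : ℝ :=
  Real.sqrt (∑ i, ∑ j, (A i j) ^ 2)

open scoped Matrix.Norms.L2Operator

lemma specNorm_eq {m n : Type*} [Fintype m] [Fintype n] [DecidableEq n]
    (A : Matrix m n ℝ) : specNorm A = ‖A‖ := rfl

lemma conjT_eq_T {m n : Type*} (A : Matrix m n ℝ) : Aᴴ = Aᵀ := by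
  ext i j; simp [conjTranspose_apply]

lemma frobNorm_nonneg {α β : Type*} [Fintype α] [Fintype β] (A : Matrix α β ℝ) :
    0 ≤ frobNorm A := Real.sqrt_nonneg _

lemma frobNorm_smul {α β : Type*} [Fintype α] [Fintype β] (c : ℝ) (A : Matrix α β ℝ) :
    frobNorm (c • A) = |c| * frobNorm A := by
  unfold frobNorm
  rw [← Real.sqrt_sq_eq_abs, ← Real.sqrt_mul (sq_nonneg c)]
  congr 1
  simp [Finset.mul_sum, mul_pow]

lemma frob_mul_le {r n : Type*} [Fintype r] [Fintype n] [DecidableEq n]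
    (A : Matrix r n ℝ) (M : Matrix n n ℝ) :
    frobNorm (A * M) ≤ specNorm M * frobNorm A := by
  have hrow : ∀ i, ∑ j, ((A * M) i j) ^ 2 ≤ ‖M‖ ^ 2 * ∑ j, (A i j) ^ 2 := by
    intro i
    set v : EuclideanSpace ℝ n := (WithLp.equiv 2 _).symm (A i) with hv
    have hw : (EuclideanSpace.equiv n ℝ).symm (Mᵀ *ᵥ (A i)) =
        ((EuclideanSpace.equiv n ℝ).symm (Mᵀ *ᵥ (A i))) := rfl
    have h1 : ∑ j, ((A * M) i j) ^ 2 =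
        ‖(EuclideanSpace.equiv n ℝ).symm (Mᵀ *ᵥ (A i))‖ ^ 2 := by
      rw [EuclideanSpace.norm_eq, Real.sq_sqrt (by positivity)]
      congr 1; ext j
      simp [Matrix.mul_apply, Matrix.mulVec, dotProduct, Matrix.transpose_apply,
        sq_abs, mul_comm]
    have h2 : ‖v‖ ^ 2 = ∑ j, (A i j) ^ 2 := by
      rw [EuclideanSpace.norm_eq, Real.sq_sqrt (by positivity)]
      simp [hv, sq_abs]
    have h3 : ‖(EuclideanSpace.equiv n ℝ).symm (Mᵀ *ᵥ (A i))‖ ≤ ‖Mᵀ‖ * ‖v‖ :=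
      Matrix.l2_opNorm_mulVec Mᵀ v
    have h4 : ‖Mᵀ‖ = ‖M‖ := by rw [← conjT_eq_T]; exact Matrix.l2_opNorm_conjTranspose M
    rw [h1, ← h2, ← mul_pow]
    rw [h4] at h3
    exact pow_le_pow_left₀ (norm_nonneg _) h3 2
  have : ∑ i, ∑ j, ((A * M) i j) ^ 2 ≤ ‖M‖ ^ 2 * ∑ i, ∑ j, (A i j) ^ 2 := by
    rw [Finset.mul_sum]
    exact Finset.sum_le_sum fun i _ => hrow i
  calc frobNorm (A * M) ≤ Real.sqrt (‖M‖ ^ 2 * ∑ i, ∑ j, (A i j) ^ 2) :=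
        Real.sqrt_le_sqrt this
    _ = specNorm M * frobNorm A := by
        rw [Real.sqrt_mul (sq_nonneg _), Real.sqrt_sq (norm_nonneg _), specNorm_eq]; rfl

/-- For `H(G₃) = ‖Y − (I_{n₂}⊗G₁)G₂G₃X‖_F²` with `G₁, G₂` having orthonormal columns,
the gradient map `∇_{G₃} H(G₃) = 2G₂ᵀ(I⊗G₁)ᵀ(−Y + (I⊗G₁)G₂G₃X)Xᵀ` satisfies
`∇_{G₃}H(Ĝ₃) − ∇_{G₃}H(G̃₃) = 2(Ĝ₃ − G̃₃)XXᵀ` and is Lipschitz with constant `2‖X‖₂²`. -/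
theorem tt_gradient_G3_lipschitz
    {n₁ n₂ r₁ r₂ k p : ℕ}
    (Y : Matrix (Fin n₂ × Fin n₁) (Fin p) ℝ)
    (G₁ : Matrix (Fin n₁) (Fin r₁) ℝ) (hG₁ : G₁ᵀ * G₁ = 1)
    (G₂ : Matrix (Fin n₂ × Fin r₁) (Fin r₂) ℝ) (hG₂ : G₂ᵀ * G₂ = 1)
    (X : Matrix (Fin k) (Fin p) ℝ)
    (grad : Matrix (Fin r₂) (Fin k) ℝ → Matrix (Fin r₂) (Fin k) ℝ)
    (hgrad : ∀ G₃, grad G₃ = (2 : ℝ) •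
      (G₂ᵀ * ((1 : Matrix (Fin n₂) (Fin n₂) ℝ) ⊗ₖ G₁)ᵀ *
        (-Y + (1 : Matrix (Fin n₂) (Fin n₂) ℝ) ⊗ₖ G₁ * G₂ * G₃ * X) * Xᵀ)) :
    ∀ G₃hat G₃tilde : Matrix (Fin r₂) (Fin k) ℝ,
      grad G₃hat - grad G₃tilde = (2 : ℝ) • ((G₃hat - G₃tilde) * X * Xᵀ) ∧
      frobNorm (grad G₃hat - grad G₃tilde) ≤
        2 * specNorm X ^ 2 * frobNorm (G₃hat - G₃tilde) := by
  intro Gh Gt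
  set K : Matrix (Fin n₂ × Fin n₁) (Fin n₂ × Fin r₁) ℝ :=
    (1 : Matrix (Fin n₂) (Fin n₂) ℝ) ⊗ₖ G₁ with hKdef
  have hK : Kᵀ * K = 1 := by
    have hT : Kᵀ = (1 : Matrix (Fin n₂) (Fin n₂) ℝ)ᵀ ⊗ₖ G₁ᵀ := rfl
    rw [hT, hKdef, ← Matrix.mul_kronecker_mul, Matrix.transpose_one, Matrix.one_mul, hG₁,
      Matrix.one_kronecker_one]
  have hform : ∀ G : Matrix (Fin r₂) (Fin k) ℝ,
      grad G = (2 : ℝ) • (G₂ᵀ * Kᵀ * (-Y) * Xᵀ) + (2 : ℝ) • (G * X * Xᵀ) := by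
    intro G
    rw [hgrad G]
    have hmid : G₂ᵀ * Kᵀ * (K * G₂ * G * X) = G * X := by
      calc G₂ᵀ * Kᵀ * (K * G₂ * G * X) = G₂ᵀ * (Kᵀ * K) * G₂ * (G * X) := by
            simp only [Matrix.mul_assoc]
        _ = G * X := by rw [hK, Matrix.mul_one, hG₂, Matrix.one_mul]
    rw [Matrix.mul_add, hmid, Matrix.add_mul, smul_add]
  have heq : grad Gh - grad Gt = (2 : ℝ) • ((Gh - Gt) * X * Xᵀ) := by
    rw [hform Gh, hform Gt]
    rw [Matrix.sub_mul, Matrix.sub_mul, smul_sub]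
    abel
  refine ⟨heq, ?_⟩
  rw [heq, frobNorm_smul, Matrix.mul_assoc]
  have h1 : frobNorm ((Gh - Gt) * (X * Xᵀ)) ≤ specNorm (X * Xᵀ) * frobNorm (Gh - Gt) :=
    frob_mul_le _ _
  have h2 : specNorm (X * Xᵀ) ≤ specNorm X ^ 2 := by
    rw [specNorm_eq, specNorm_eq]
    calc ‖X * Xᵀ‖ ≤ ‖X‖ * ‖Xᵀ‖ := Matrix.l2_opNorm_mul X Xᵀ
      _ = ‖X‖ ^ 2 := by rw [← conjT_eq_T, Matrix.l2_opNorm_conjTranspose, sq]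
  have h3 : (0:ℝ) ≤ frobNorm (Gh - Gt) := frobNorm_nonneg _
  calc |(2:ℝ)| * frobNorm ((Gh - Gt) * (X * Xᵀ))
      ≤ 2 * (specNorm X ^ 2 * frobNorm (Gh - Gt)) := by
        rw [abs_two]
        exact mul_le_mul_of_nonneg_left
          (h1.trans (mul_le_mul_of_nonneg_right h2 h3)) (by norm_num)
    _ = 2 * specNorm X ^ 2 * frobNorm (Gh - Gt) := by ring
end

section
/- Let H : ℝⁿ × ℝᵐ → ℝ be such that, for a fixed y ∈ ℝᵐ, the function x ↦ H(x,y) is differentiable with gradient ∇_x H(·, y) Lipschitz continuous with constant L > 0, let f₁ : ℝⁿ → ℝ, let α > 0, and fix x_k ∈ ℝⁿ. Suppose x₊ ∈ ℝⁿ is a global minimizer over w ∈ ℝⁿ of the proximal subproblem w ↦ f₁(w) + ⟨∇_x H(x_k, y), w − x_k⟩ + (1/(2α))‖w − x_k‖₂². Then, writing Ψ₁(x,y) = H(x,y) + f₁(x), the descent inequality Ψ₁(x₊, y) ≤ Ψ₁(x_k, y) − (1/2)(1/α − L)‖x₊ − x_k‖₂² holds. -/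
/-! The Lipschitz gradient bounds `H(x₊, y)` by its quadratic model
`H(x_k, y) + ⟨∇H(x_k, y), x₊ − x_k⟩ + (L/2)‖x₊ − x_k‖²`, while testing the minimality of `x₊`
against `w = x_k` bounds `f₁(x₊)` by `f₁(x_k) − ⟨∇H(x_k, y), x₊ − x_k⟩ − (1/(2α))‖x₊ − x_k‖²`;
the linear terms cancel in the sum. -/

open RealInnerProductSpace

section GradientLipschitz

variable {E : Type*} [NormedAddCommGroup E] [InnerProductSpace ℝ E] [CompleteSpace E]

theorem HasGradientAt.hasDerivAt_add_smul {f : E → ℝ} {f' x d : E} {t : ℝ}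
    (hf : HasGradientAt f f' (x + t • d)) :
    HasDerivAt (fun s : ℝ => f (x + s • d)) ⟪f', d⟫ t := by
  have hline : HasDerivAt (fun s : ℝ => x + s • d) d t := by
    simpa using ((hasDerivAt_id t).smul_const d).const_add x
  exact hf.hasFDerivAt.comp_hasDerivAt t hline

theorem le_add_inner_add_half_mul_sq_of_gradient_lipschitz {f : E → ℝ} {f' : E → E} {L : ℝ}
    (hf : ∀ x, HasGradientAt f (f' x) x) (hLip : ∀ u v, ‖f' u - f' v‖ ≤ L * ‖u - v‖) (x y : E) :
    f y ≤ f x + ⟪f' x, y - x⟫ + L / 2 * ‖y - x‖ ^ 2 := by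
  set d := y - x
  have hderiv (t : ℝ) : HasDerivAt (fun s : ℝ => f (x + s • d)) ⟪f' (x + t • d), d⟫ t :=
    (hf _).hasDerivAt_add_smul
  have hbound : ∀ t ∈ Set.Ico (0 : ℝ) 1, ⟪f' (x + t • d), d⟫ ≤ ⟪f' x, d⟫ + L * t * ‖d‖ ^ 2 := by
    intro t ht
    have hgap : ‖f' (x + t • d) - f' x‖ ≤ L * (t * ‖d‖) := by
      simpa [norm_smul, abs_of_nonneg ht.1] using hLip (x + t • d) x
    calc ⟪f' (x + t • d), d⟫ = ⟪f' x, d⟫ + ⟪f' (x + t • d) - f' x, d⟫ := by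
          rw [inner_sub_left]; ring
      _ ≤ ⟪f' x, d⟫ + ‖f' (x + t • d) - f' x‖ * ‖d‖ := by gcongr; exact real_inner_le_norm _ _
      _ ≤ ⟪f' x, d⟫ + L * (t * ‖d‖) * ‖d‖ := by gcongr
      _ = ⟪f' x, d⟫ + L * t * ‖d‖ ^ 2 := by ring
  have hB (t : ℝ) : HasDerivAt (fun s : ℝ => f x + s * ⟪f' x, d⟫ + L / 2 * s ^ 2 * ‖d‖ ^ 2)
      (⟪f' x, d⟫ + L * t * ‖d‖ ^ 2) t := by
    have := (((hasDerivAt_id' t).mul_const ⟪f' x, d⟫).const_add (f x)).add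
      (((hasDerivAt_pow 2 t).const_mul (L / 2)).mul_const (‖d‖ ^ 2))
    exact this.congr_deriv (by push_cast; ring)
  -- Compare `t ↦ f (x + t • d)` with its quadratic upper model on `[0, 1]`.
  have hmodel := image_le_of_deriv_right_le_deriv_boundary
    (fun t _ => (hderiv t).continuousAt.continuousWithinAt) (fun t _ => (hderiv t).hasDerivWithinAt)
    (by simp) (fun t _ => (hB t).continuousAt.continuousWithinAt) (fun t _ => (hB t).hasDerivWithinAt)
    hbound (b := 1) (Set.right_mem_Icc.2 zero_le_one)
  simpa [d] using hmodel

end GradientLipschitz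

theorem prox_gradient_descent_lemma_general
    {n m : ℕ}
    (H : EuclideanSpace ℝ (Fin n) → EuclideanSpace ℝ (Fin m) → ℝ)
    (y : EuclideanSpace ℝ (Fin m))
    (g : EuclideanSpace ℝ (Fin n) → EuclideanSpace ℝ (Fin n))
    (L : ℝ)
    (hgrad : ∀ x, HasGradientAt (fun u => H u y) (g x) x)
    (hLip : ∀ u v, ‖g u - g v‖ ≤ L * ‖u - v‖)
    (f₁ : EuclideanSpace ℝ (Fin n) → ℝ)
    (α : ℝ)
    (xk xp : EuclideanSpace ℝ (Fin n))
    (hmin : ∀ w, f₁ xp + ⟪g xk, xp - xk⟫ + 1 / (2 * α) * ‖xp - xk‖ ^ 2 ≤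
      f₁ w + ⟪g xk, w - xk⟫ + 1 / (2 * α) * ‖w - xk‖ ^ 2) :
    H xp y + f₁ xp ≤ H xk y + f₁ xk - 1 / 2 * (1 / α - L) * ‖xp - xk‖ ^ 2 := by
  have hsmooth := le_add_inner_add_half_mul_sq_of_gradient_lipschitz hgrad hLip xk xp
  have hprox : f₁ xp + ⟪g xk, xp - xk⟫ + 1 / (2 * α) * ‖xp - xk‖ ^ 2 ≤ f₁ xk := by
    simpa using hmin xk
  have hcoeff : 1 / (2 * α) = 1 / 2 * (1 / α) := by rw [one_div_mul_one_div]
  rw [hcoeff] at hprox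
  linarith

/-- Descent lemma for a proximal gradient step: if `x₊` globally minimizes the proximal
subproblem `w ↦ f₁(w) + ⟨∇_x H(x_k,y), w − x_k⟩ + (1/(2α))‖w − x_k‖²` and
`∇_x H(·,y)` is `L`-Lipschitz, then
`Ψ₁(x₊,y) ≤ Ψ₁(x_k,y) − ½(1/α − L)‖x₊ − x_k‖²` where `Ψ₁ = H + f₁`. -/
theorem prox_gradient_descent_lemma
    {n m : ℕ}
    (H : EuclideanSpace ℝ (Fin n) → EuclideanSpace ℝ (Fin m) → ℝ)
    (y : EuclideanSpace ℝ (Fin m))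
    (g : EuclideanSpace ℝ (Fin n) → EuclideanSpace ℝ (Fin n))
    (L : ℝ) (hL : 0 < L)
    (hgrad : ∀ x, HasGradientAt (fun u => H u y) (g x) x)
    (hLip : ∀ u v, ‖g u - g v‖ ≤ L * ‖u - v‖)
    (f₁ : EuclideanSpace ℝ (Fin n) → ℝ)
    (α : ℝ) (hα : 0 < α)
    (xk xp : EuclideanSpace ℝ (Fin n))
    (hmin : ∀ w, f₁ xp + ⟪g xk, xp - xk⟫ + 1 / (2 * α) * ‖xp - xk‖ ^ 2 ≤
      f₁ w + ⟪g xk, w - xk⟫ + 1 / (2 * α) * ‖w - xk‖ ^ 2) :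
    H xp y + f₁ xp ≤ H xk y + f₁ xk - 1 / 2 * (1 / α - L) * ‖xp - xk‖ ^ 2 :=
  prox_gradient_descent_lemma_general H y g L hgrad hLip f₁ α xk xp hmin
end
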